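/- arXiv:2501.09250 — 2 statements merged into one kernel-verified Lean document; each statement's English description precedes it below -/
import Mathlib

section
/- Let a, c be complex polynomials with a·c not identically zero, and let d be a nonconstant complex polynomial. Then the polynomial h = a·c' − a'·c + 2·a·c·d' is not identically zero. -/
open Polynomial

theorem stmt_13 (a c d : Polynomial ℂ) (hac : a * c ≠ 0)
    (hd : d.natDegree ≠ 0) :
    a * (derivative c) - (derivative a) * c + 2 * a * c * (derivative d) ≠ 0 := by
  have ha : a ≠ 0 := left_ne_zero_of_mul hac
  have hc : c ≠ 0 := right_ne_zero_of_mul hac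
  have hd' : derivative d ≠ 0 := fun h => hd (natDegree_eq_zero_of_derivative_eq_zero h)
  have hadeg : a.degree ≠ ⊥ := by simpa [degree_eq_bot] using ha
  have hcdeg : c.degree ≠ ⊥ := by simpa [degree_eq_bot] using hc
  have h2 : (2 : ℂ[X]) ≠ 0 := by norm_num
  have hq : (2 * a * c * derivative d).degree = a.degree + c.degree + (derivative d).degree := by
    rw [degree_mul, degree_mul, degree_mul]
    have : (2 : ℂ[X]).degree = 0 := by
      rw [map_ofNat C 2 |>.symm, degree_C two_ne_zero]
    rw [this, zero_add]
  have hge : a.degree + c.degree ≤ (2 * a * c * derivative d).degree := by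
    rw [hq]
    exact le_add_of_nonneg_right ((zero_le_degree_iff).2 hd')
  have h1 : (a * derivative c - derivative a * c).degree < a.degree + c.degree := by
    apply lt_of_le_of_lt (degree_sub_le _ _)
    apply max_lt
    · rw [degree_mul]
      exact WithBot.add_lt_add_left hadeg (degree_derivative_lt hc)
    · rw [degree_mul]
      exact WithBot.add_lt_add_right hcdeg (degree_derivative_lt ha)
  have h3 : (a * derivative c - derivative a * c).degree < (2 * a * c * derivative d).degree :=
    lt_of_lt_of_le h1 hge
  have h4 := degree_add_eq_right_of_degree_lt h3
  intro h0
  rw [h0, degree_zero] at h4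
  have : 2 * a * c * derivative d ≠ 0 := by
    simp [mul_ne_zero, ha, hc, hd', h2]
  exact this (degree_eq_bot.1 h4.symm)
end

section
/- Let b, c be complex polynomials with b·c not identically zero, and let d be a nonconstant complex polynomial. Then the polynomial s = b'·c − b·c' − 2·b·c·d' is not identically zero. -/
open Polynomial

theorem stmt_14 (b c d : Polynomial ℂ) (hbc : b * c ≠ 0)
    (hd : d.natDegree ≠ 0) :
    (derivative b) * c - b * (derivative c) - 2 * b * c * (derivative d) ≠ 0 := by
  intro h
  have hb : b ≠ 0 := left_ne_zero_of_mul hbc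
  have hc : c ≠ 0 := right_ne_zero_of_mul hbc
  have hd' : derivative d ≠ 0 := fun h0 => hd (natDegree_eq_zero_of_derivative_eq_zero h0)
  have h2 : (2 : Polynomial ℂ) ≠ 0 := two_ne_zero
  have hB : 2 * b * c * derivative d ≠ 0 :=
    mul_ne_zero (mul_ne_zero (mul_ne_zero h2 hb) hc) hd'
  have heq : derivative b * c - b * derivative c = 2 * b * c * derivative d := sub_eq_zero.mp h
  by_cases hA : derivative b * c - b * derivative c = 0
  · rw [hA] at heq; exact hB heq.symm
  · have hb' : (derivative b * c).natDegree ≤ b.natDegree + c.natDegree - 1 := by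
      by_cases h0 : b.natDegree = 0
      · rw [derivative_of_natDegree_zero h0, zero_mul, natDegree_zero]; omega
      · have h3 := natDegree_derivative_le b
        have h4 := natDegree_mul_le (p := derivative b) (q := c)
        omega
    have hc' : (b * derivative c).natDegree ≤ b.natDegree + c.natDegree - 1 := by
      by_cases h0 : c.natDegree = 0
      · rw [derivative_of_natDegree_zero h0, mul_zero, natDegree_zero]; omega
      · have h3 := natDegree_derivative_le c
        have h4 := natDegree_mul_le (p := b) (q := derivative c)
        omega
    have h1 : (derivative b * c - b * derivative c).natDegree ≤ b.natDegree + c.natDegree - 1 :=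
      (natDegree_sub_le _ _).trans (max_le hb' hc')
    have hdeg : (2 * b * c * derivative d).natDegree
        = b.natDegree + c.natDegree + (derivative d).natDegree := by
      rw [natDegree_mul (mul_ne_zero (mul_ne_zero h2 hb) hc) hd',
        natDegree_mul (mul_ne_zero h2 hb) hc, natDegree_mul h2 hb, natDegree_ofNat]
      ring
    have hnbc : b.natDegree + c.natDegree ≠ 0 := by
      intro h0
      apply hA
      rw [derivative_of_natDegree_zero (by omega), derivative_of_natDegree_zero (by omega)]
      ring
    have hlt : (derivative b * c - b * derivative c).natDegree
        < (2 * b * c * derivative d).natDegree := by omega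
    have := degree_lt_degree hlt
    rw [heq] at this
    exact lt_irrefl _ this
end
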